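/- Let h_0, h_1, ..., h_{L-1} be independent circularly symmetric complex Gaussian random variables with variances σ_0², ..., σ_{L-1}² summing to P. Define C = ∑_{ℓ=1}^{L-1} -(2πℓ/K)² h_ℓ e^{-2πi ℓ k/K}. Then E[|C|] ≤ (2π/K)² √(2 log 4) · √((P − σ_0²) ∑_{ℓ=1}^{L-1} ℓ⁴). -/

import Mathlib

open MeasureTheory ProbabilityTheory Finset Real
open scoped ENNReal NNReal

lemma integral_Ioi_mul_exp_neg_mul_sq {b : ℝ} (hb : 0 < b) :
    ∫ x in Set.Ioi (0:ℝ), x * Real.exp (-b * x ^ 2) = (2*b)⁻¹ := by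
  have hb' : (0:ℝ) < (b:ℂ).re := by simpa using hb
  have H := integral_mul_cexp_neg_mul_sq (b := (b:ℂ)) hb'
  have hint := (integrable_mul_cexp_neg_mul_sq hb').integrableOn (s := Set.Ioi 0)
  have hre := integral_re hint
  rw [H] at hre
  have : ∀ x : ℝ, ((x:ℂ) * Complex.exp (-(b:ℂ) * (x:ℂ)^2)).re = x * Real.exp (-b * x^2) := by
    intro x
    have : (-(b:ℂ) * (x:ℂ)^2) = ((-b * x^2 : ℝ) : ℂ) := by push_cast; ring
    rw [this, ← Complex.ofReal_exp, ← Complex.ofReal_mul, Complex.ofReal_re]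
  simp only [RCLike.re_to_complex] at hre
  rw [show (fun a : ℝ => ((a:ℂ) * Complex.exp (-(b:ℂ) * (a:ℂ)^2)).re) = fun a : ℝ => a * Real.exp (-b * a^2) from funext this] at hre
  rw [hre, show (2*(b:ℂ)) = ((2*b:ℝ):ℂ) by push_cast; ring, ← Complex.ofReal_inv,
    Complex.ofReal_re]

lemma gaussianPDFReal_mul_abs_eq (v : ℝ≥0) (hv : v ≠ 0) (x : ℝ) :
    gaussianPDFReal 0 v x * |x|
      = (Real.sqrt (2 * π * v))⁻¹ * (|x| * Real.exp (-(2 * (v:ℝ))⁻¹ * x ^ 2)) := by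
  have hv' : (0:ℝ) < v := lt_of_le_of_ne v.coe_nonneg (by exact_mod_cast (Ne.symm hv))
  rw [gaussianPDFReal]
  have : -(x - 0) ^ 2 / (2 * (v:ℝ)) = -(2 * (v:ℝ))⁻¹ * x ^ 2 := by
    field_simp
    ring
  rw [this]; ring

lemma integrable_abs_gaussianReal (v : ℝ≥0) :
    Integrable (fun x : ℝ => |x|) (gaussianReal 0 v) := by
  by_cases hv : v = 0
  · rw [hv, gaussianReal_zero_var]
    exact (integrable_const _).congr (MeasureTheory.ae_eq_dirac (fun x : ℝ => |x|)).symm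
  · have hv' : (0:ℝ) < v := lt_of_le_of_ne v.coe_nonneg (by exact_mod_cast (Ne.symm hv))
    have hb : (0:ℝ) < (2 * (v:ℝ))⁻¹ := by positivity
    rw [gaussianReal_of_var_ne_zero _ hv]
    have hpdf : gaussianPDF 0 v = fun x => ((gaussianPDFReal 0 v x).toNNReal : ℝ≥0∞) := rfl
    rw [hpdf, integrable_withDensity_iff_integrable_smul
      (measurable_gaussianPDFReal 0 v).real_toNNReal]
    have key : ∀ x : ℝ, (gaussianPDFReal 0 v x).toNNReal • |x| = gaussianPDFReal 0 v x * |x| := by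
      intro x
      rw [NNReal.smul_def, smul_eq_mul, Real.coe_toNNReal _ (gaussianPDFReal_nonneg 0 v x)]
    simp only [key]
    have : Integrable (fun x : ℝ => |x| * Real.exp (-(2 * (v:ℝ))⁻¹ * x ^ 2)) := by
      have := (integrable_mul_exp_neg_mul_sq hb).abs
      refine this.congr (Filter.Eventually.of_forall fun x => ?_)
      simp [abs_mul, Real.abs_exp]
    refine (this.const_mul ((Real.sqrt (2 * π * v))⁻¹)).congr
      (Filter.Eventually.of_forall fun x => ?_)
    exact (gaussianPDFReal_mul_abs_eq v hv x).symm

lemma integral_abs_gaussianReal_le (v : ℝ≥0) :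
    ∫ x, |x| ∂(gaussianReal 0 v) ≤ Real.sqrt v := by
  by_cases hv : v = 0
  · rw [hv, gaussianReal_zero_var, integral_dirac]
    simp
  · have hv' : (0:ℝ) < v := lt_of_le_of_ne v.coe_nonneg (by exact_mod_cast (Ne.symm hv))
    have hb : (0:ℝ) < (2 * (v:ℝ))⁻¹ := by positivity
    rw [gaussianReal_of_var_ne_zero _ hv]
    have hpdf : gaussianPDF 0 v = fun x => ((gaussianPDFReal 0 v x).toNNReal : ℝ≥0∞) := rfl
    rw [hpdf, integral_withDensity_eq_integral_smul
      (measurable_gaussianPDFReal 0 v).real_toNNReal]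
    have key : ∀ x : ℝ, (gaussianPDFReal 0 v x).toNNReal • |x| = gaussianPDFReal 0 v x * |x| := by
      intro x
      rw [NNReal.smul_def, smul_eq_mul, Real.coe_toNNReal _ (gaussianPDFReal_nonneg 0 v x)]
    simp only [key]
    calc ∫ x, gaussianPDFReal 0 v x * |x|
        = (Real.sqrt (2 * π * v))⁻¹ * ∫ x, |x| * Real.exp (-(2 * (v:ℝ))⁻¹ * x ^ 2) := by
          rw [← integral_const_mul]
          exact integral_congr_ae (Filter.Eventually.of_forall fun x =>
            gaussianPDFReal_mul_abs_eq v hv x)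
      _ = (Real.sqrt (2 * π * v))⁻¹ * (2 * (2 * (2 * (v:ℝ))⁻¹)⁻¹) := by
          congr 1
          have habs := integral_comp_abs (f := fun t : ℝ => t * Real.exp (-(2 * (v:ℝ))⁻¹ * t ^ 2))
          simp only [sq_abs] at habs
          rw [habs, integral_Ioi_mul_exp_neg_mul_sq hb]
      _ = (Real.sqrt (2 * π * v))⁻¹ * (2 * (v:ℝ)) := by
          congr 1
          field_simp
      _ ≤ Real.sqrt v := by
          rw [inv_mul_le_iff₀ (by positivity)]
          have h1 : (2 * (v:ℝ)) = Real.sqrt ((2*v) * (2*v)) := by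
            rw [Real.sqrt_mul_self (by positivity)]
          rw [h1, ← Real.sqrt_mul (by positivity : (0:ℝ) ≤ 2 * π * ↑v)]
          apply Real.sqrt_le_sqrt
          nlinarith [Real.pi_gt_three, sq_nonneg ((v:ℝ))]

/-- Theorem 1 of the paper: for independent circularly symmetric complex Gaussian taps
`h_ℓ = X_ℓ + i Y_ℓ` with variances `σ_ℓ²` summing to `P`, the curvature
`C = ∑_{ℓ=1}^{L-1} -(2πℓ/K)² h_ℓ e^{-2πi ℓ k/K}` satisfies
`E[|C|] ≤ (2π/K)² √(2 log 4) √((P - σ_0²) ∑ ℓ⁴)`. -/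
theorem curvature_abs_expectation_le_gaussian
    {Ω : Type*} [MeasurableSpace Ω] {μ : Measure Ω} [IsProbabilityMeasure μ]
    (K L : ℕ) (hK : 1 ≤ K) (hL : 2 ≤ L) (k : ℤ)
    (σ : ℕ → ℝ) (hσ : ∀ ℓ, 0 ≤ σ ℓ) (P : ℝ)
    (hP : P = ∑ ℓ ∈ Finset.range L, σ ℓ ^ 2)
    (X Y : ℕ → Ω → ℝ) (hX : ∀ ℓ, Measurable (X ℓ)) (hY : ∀ ℓ, Measurable (Y ℓ))
    (h : ℕ → Ω → ℂ) (hdef : ∀ ℓ ω, h ℓ ω = X ℓ ω + Complex.I * Y ℓ ω)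
    (hXY : ∀ ℓ, IndepFun (X ℓ) (Y ℓ) μ)
    (hXlaw : ∀ ℓ, Measure.map (X ℓ) μ = gaussianReal 0 (Real.toNNReal (σ ℓ ^ 2 / 2)))
    (hYlaw : ∀ ℓ, Measure.map (Y ℓ) μ = gaussianReal 0 (Real.toNNReal (σ ℓ ^ 2 / 2)))
    (hindep : iIndepFun h μ) :
    (∫ ω, ‖(∑ ℓ ∈ Finset.Ico 1 L,
        (-((2 * π * ℓ / K : ℝ) ^ 2) : ℂ) * h ℓ ω *
          Complex.exp (-2 * π * Complex.I * ℓ * k / K))‖ ∂μ) ≤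
      (2 * π / K) ^ 2 * Real.sqrt (2 * Real.log 4) *
        Real.sqrt ((P - σ 0 ^ 2) * ∑ ℓ ∈ Finset.Ico 1 L, (ℓ : ℝ) ^ 4) := by
  -- notation
  set a : ℕ → ℝ := fun ℓ => (2 * π * ℓ / K) ^ 2 with ha
  have ha0 : ∀ ℓ : ℕ, 0 ≤ a ℓ := fun ℓ => sq_nonneg _
  -- integrability and moment bound for |X ℓ|, |Y ℓ|
  have intX : ∀ ℓ, Integrable (fun ω => |X ℓ ω|) μ := by
    intro ℓ
    have h1 : Integrable (fun x : ℝ => |x|) (Measure.map (X ℓ) μ) := by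
      rw [hXlaw ℓ]; exact integrable_abs_gaussianReal _
    exact (integrable_map_measure continuous_abs.aestronglyMeasurable
      (hX ℓ).aemeasurable).mp h1
  have intY : ∀ ℓ, Integrable (fun ω => |Y ℓ ω|) μ := by
    intro ℓ
    have h1 : Integrable (fun x : ℝ => |x|) (Measure.map (Y ℓ) μ) := by
      rw [hYlaw ℓ]; exact integrable_abs_gaussianReal _
    exact (integrable_map_measure continuous_abs.aestronglyMeasurable
      (hY ℓ).aemeasurable).mp h1
  have sqv : ∀ ℓ : ℕ, Real.sqrt ((Real.toNNReal (σ ℓ ^ 2 / 2) : ℝ)) = σ ℓ / Real.sqrt 2 := by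
    intro ℓ
    rw [Real.coe_toNNReal _ (by positivity)]
    rw [show σ ℓ ^ 2 / 2 = (σ ℓ / Real.sqrt 2) ^ 2 by
      rw [div_pow, Real.sq_sqrt (by norm_num : (0:ℝ) ≤ 2)]]
    exact Real.sqrt_sq (div_nonneg (hσ ℓ) (Real.sqrt_nonneg 2))
  have EX : ∀ ℓ, ∫ ω, |X ℓ ω| ∂μ ≤ σ ℓ / Real.sqrt 2 := by
    intro ℓ
    have h1 : ∫ ω, |X ℓ ω| ∂μ = ∫ x, |x| ∂(Measure.map (X ℓ) μ) :=
      (integral_map (hX ℓ).aemeasurable continuous_abs.aestronglyMeasurable).symm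
    rw [h1, hXlaw ℓ, ← sqv ℓ]
    exact integral_abs_gaussianReal_le _
  have EY : ∀ ℓ, ∫ ω, |Y ℓ ω| ∂μ ≤ σ ℓ / Real.sqrt 2 := by
    intro ℓ
    have h1 : ∫ ω, |Y ℓ ω| ∂μ = ∫ x, |x| ∂(Measure.map (Y ℓ) μ) :=
      (integral_map (hY ℓ).aemeasurable continuous_abs.aestronglyMeasurable).symm
    rw [h1, hYlaw ℓ, ← sqv ℓ]
    exact integral_abs_gaussianReal_le _
  -- pointwise bound
  have hpt : ∀ ω, ‖(∑ ℓ ∈ Finset.Ico 1 L,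
      (-((2 * π * ℓ / K : ℝ) ^ 2) : ℂ) * h ℓ ω *
        Complex.exp (-2 * π * Complex.I * ℓ * k / K))‖
      ≤ ∑ ℓ ∈ Finset.Ico 1 L, a ℓ * (|X ℓ ω| + |Y ℓ ω|) := by
    intro ω
    refine (norm_sum_le _ _).trans (Finset.sum_le_sum fun ℓ _ => ?_)
    rw [norm_mul, norm_mul]
    have e1 : ‖(-((2 * π * ℓ / K : ℝ) ^ 2) : ℂ)‖ = a ℓ := by
      rw [show (-((2 * π * ℓ / K : ℝ) ^ 2) : ℂ) = ((-( (2 * π * ℓ / K : ℝ) ^ 2) : ℝ) : ℂ) by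
        push_cast; ring]
      rw [Complex.norm_real, Real.norm_eq_abs, abs_neg, abs_of_nonneg (sq_nonneg _)]
    have e2 : ‖(Complex.exp (-2 * π * Complex.I * ℓ * k / K))‖ = 1 := by
      rw [show (-2 * π * Complex.I * ℓ * k / K)
          = Complex.I * ((-2 * π * ℓ * k / K : ℝ) : ℂ) by push_cast; ring]
      rw [Complex.norm_exp]
      simp [Complex.mul_re]
    have e3 : ‖(h ℓ ω)‖ ≤ |X ℓ ω| + |Y ℓ ω| := by
      rw [hdef ℓ ω]
      refine (norm_add_le _ _).trans ?_
      rw [Complex.norm_real, Real.norm_eq_abs, norm_mul, Complex.norm_I, Complex.norm_real, Real.norm_eq_abs, one_mul]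
    rw [e1, e2, mul_one]
    exact mul_le_mul_of_nonneg_left e3 (ha0 ℓ)
  -- integrable dominating function
  have hgint : Integrable (fun ω => ∑ ℓ ∈ Finset.Ico 1 L, a ℓ * (|X ℓ ω| + |Y ℓ ω|)) μ :=
    integrable_finset_sum _ fun ℓ _ => (((intX ℓ).add (intY ℓ)).const_mul _)
  -- bound the integral
  have step1 : (∫ ω, ‖(∑ ℓ ∈ Finset.Ico 1 L,
      (-((2 * π * ℓ / K : ℝ) ^ 2) : ℂ) * h ℓ ω *
        Complex.exp (-2 * π * Complex.I * ℓ * k / K))‖ ∂μ)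
      ≤ ∫ ω, ∑ ℓ ∈ Finset.Ico 1 L, a ℓ * (|X ℓ ω| + |Y ℓ ω|) ∂μ :=
    integral_mono_of_nonneg
      (Filter.Eventually.of_forall fun ω => norm_nonneg _) hgint
      (Filter.Eventually.of_forall hpt)
  have step2 : (∫ ω, ∑ ℓ ∈ Finset.Ico 1 L, a ℓ * (|X ℓ ω| + |Y ℓ ω|) ∂μ)
      = ∑ ℓ ∈ Finset.Ico 1 L, a ℓ * ((∫ ω, |X ℓ ω| ∂μ) + ∫ ω, |Y ℓ ω| ∂μ) := by
    rw [integral_finset_sum (Finset.Ico 1 L)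
      (f := fun ℓ ω => a ℓ * (|X ℓ ω| + |Y ℓ ω|))
      (fun ℓ _ => (((intX ℓ).add (intY ℓ)).const_mul _))]
    refine Finset.sum_congr rfl fun ℓ _ => ?_
    rw [integral_const_mul, integral_add (intX ℓ) (intY ℓ)]
  have step3 : ∑ ℓ ∈ Finset.Ico 1 L, a ℓ * ((∫ ω, |X ℓ ω| ∂μ) + ∫ ω, |Y ℓ ω| ∂μ)
      ≤ ∑ ℓ ∈ Finset.Ico 1 L, a ℓ * (Real.sqrt 2 * σ ℓ) := by
    refine Finset.sum_le_sum fun ℓ _ => mul_le_mul_of_nonneg_left ?_ (ha0 ℓ)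
    have h2 : Real.sqrt 2 * Real.sqrt 2 = 2 := Real.mul_self_sqrt (by norm_num)
    have h2' : Real.sqrt 2 ≠ 0 := by positivity
    have : σ ℓ / Real.sqrt 2 + σ ℓ / Real.sqrt 2 = Real.sqrt 2 * σ ℓ := by
      field_simp
      linear_combination (-σ ℓ) * h2
    calc (∫ ω, |X ℓ ω| ∂μ) + ∫ ω, |Y ℓ ω| ∂μ ≤ σ ℓ / Real.sqrt 2 + σ ℓ / Real.sqrt 2 :=
          add_le_add (EX ℓ) (EY ℓ)
      _ = Real.sqrt 2 * σ ℓ := this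
  -- algebraic rearrangement and Cauchy–Schwarz
  have sumP : ∑ ℓ ∈ Finset.Ico 1 L, σ ℓ ^ 2 = P - σ 0 ^ 2 := by
    rw [hP, Finset.sum_range_eq_add_Ico _ (by omega : 0 < L)]
    ring
  have hCS : ∑ ℓ ∈ Finset.Ico 1 L, (ℓ : ℝ) ^ 2 * σ ℓ
      ≤ Real.sqrt ((P - σ 0 ^ 2) * ∑ ℓ ∈ Finset.Ico 1 L, (ℓ : ℝ) ^ 4) := by
    rw [Real.le_sqrt (Finset.sum_nonneg fun ℓ _ =>
      mul_nonneg (by positivity) (hσ ℓ)) (by rw [← sumP]; positivity)]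
    have := Finset.sum_mul_sq_le_sq_mul_sq (Finset.Ico 1 L)
      (fun ℓ => (ℓ : ℝ) ^ 2) (fun ℓ => σ ℓ)
    calc (∑ ℓ ∈ Finset.Ico 1 L, (ℓ : ℝ) ^ 2 * σ ℓ) ^ 2
        ≤ (∑ ℓ ∈ Finset.Ico 1 L, ((ℓ : ℝ) ^ 2) ^ 2) * ∑ ℓ ∈ Finset.Ico 1 L, σ ℓ ^ 2 := this
      _ = (P - σ 0 ^ 2) * ∑ ℓ ∈ Finset.Ico 1 L, (ℓ : ℝ) ^ 4 := by
          rw [sumP, mul_comm]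
          congr 1
          exact Finset.sum_congr rfl fun ℓ _ => by ring
  have step4 : ∑ ℓ ∈ Finset.Ico 1 L, a ℓ * (Real.sqrt 2 * σ ℓ)
      = Real.sqrt 2 * (2 * π / K) ^ 2 * ∑ ℓ ∈ Finset.Ico 1 L, (ℓ : ℝ) ^ 2 * σ ℓ := by
    rw [Finset.mul_sum]
    refine Finset.sum_congr rfl fun ℓ _ => ?_
    simp only [ha]
    ring
  have hlog : Real.sqrt 2 ≤ Real.sqrt (2 * Real.log 4) := by
    apply Real.sqrt_le_sqrt
    have : (1:ℝ) ≤ Real.log 4 := by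
      rw [Real.le_log_iff_exp_le (by norm_num : (0:ℝ) < 4)]
      have := Real.exp_one_lt_d9
      linarith
    linarith
  calc (∫ ω, ‖(∑ ℓ ∈ Finset.Ico 1 L,
      (-((2 * π * ℓ / K : ℝ) ^ 2) : ℂ) * h ℓ ω *
        Complex.exp (-2 * π * Complex.I * ℓ * k / K))‖ ∂μ)
      ≤ ∑ ℓ ∈ Finset.Ico 1 L, a ℓ * (Real.sqrt 2 * σ ℓ) := step1.trans (step2 ▸ step3)
    _ = Real.sqrt 2 * (2 * π / K) ^ 2 * ∑ ℓ ∈ Finset.Ico 1 L, (ℓ : ℝ) ^ 2 * σ ℓ := step4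
    _ ≤ Real.sqrt 2 * (2 * π / K) ^ 2
        * Real.sqrt ((P - σ 0 ^ 2) * ∑ ℓ ∈ Finset.Ico 1 L, (ℓ : ℝ) ^ 4) := by
        exact mul_le_mul_of_nonneg_left hCS (by positivity)
    _ ≤ (2 * π / K) ^ 2 * Real.sqrt (2 * Real.log 4)
        * Real.sqrt ((P - σ 0 ^ 2) * ∑ ℓ ∈ Finset.Ico 1 L, (ℓ : ℝ) ^ 4) := by
        have hs : (0:ℝ) ≤ Real.sqrt ((P - σ 0 ^ 2) * ∑ ℓ ∈ Finset.Ico 1 L, (ℓ : ℝ) ^ 4) :=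
          Real.sqrt_nonneg _
        have hM : Real.sqrt 2 * (2 * π / (K:ℝ)) ^ 2
            ≤ (2 * π / (K:ℝ)) ^ 2 * Real.sqrt (2 * Real.log 4) := by
          rw [mul_comm]
          exact mul_le_mul_of_nonneg_left hlog (sq_nonneg _)
        exact mul_le_mul_of_nonneg_right hM hs
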